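/- arXiv:0705.4539 — 3 statements merged into one kernel-verified Lean document; each statement's English description precedes it below -/
import Mathlib

section
/- Suppose m21 is even. Then for all i, k ∈ ℤ/2ℤ and j, l ∈ ℤ one has [t_0^i t^{j m₂}, t_0^k t^{l m₂}] = δ_{i+k,0} δ_{j+l,0} j q^{−j² m21 m22} (m21 c1 + m22 c2); consequently the derived subalgebra of L_0 is the one-dimensional span of the central element m21 c1 + m22 c2, i.e. L_0 is a Heisenberg Lie algebra. -/
open scoped BigOperators

noncomputable section

namespace QTorus

/-- The sign `(−1)^{a·i}` for `i ∈ ℤ/2ℤ`: it is `(−1)^a` if `i = 1` and `1` if `i = 0`. -/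
def sgn (a : ℤ) (i : ZMod 2) : ℂ := if i = 0 then 1 else (-1 : ℂ) ^ a

/-- `q` is generic: nonzero and not a root of unity. -/
def Generic (q : ℂ) : Prop := q ≠ 0 ∧ ∀ n : ℤ, n ≠ 0 → q ^ n ≠ 1

/-- `{b1, b2}` is a ℤ-basis of `ℤ²`. -/
def IsZBasis (b1 b2 : ℤ × ℤ) : Prop :=
  b1.1 * b2.2 - b1.2 * b2.1 = 1 ∨ b1.1 * b2.2 - b1.2 * b2.1 = -1

/-- The determinant `α = m11 m22 − m12 m21`. -/
def detZ (m₁ m₂ : ℤ × ℤ) : ℤ := m₁.1 * m₂.2 - m₁.2 * m₂.1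

/-- Presentation of the Lie algebra `L` of the paper: basis
`{t_0^i t^m : i ∈ ℤ/2ℤ, m ∈ ℤ²} ∖ {t_0^0 t^{(0,0)}}` together with the central elements
`c1, c2`, where `t_0^0 t^{(0,0)}` is read as `0`, and the Lie bracket of the paper. -/
structure LData (q : ℂ) (L : Type) [LieRing L] [LieAlgebra ℂ L] where
  t : ZMod 2 → ℤ × ℤ → L
  c1 : L
  c2 : L
  t00 : t 0 (0, 0) = 0
  indep : LinearIndependent ℂ
    (Sum.elim (fun x : {p : ZMod 2 × (ℤ × ℤ) // p ≠ (0, (0, 0))} => t x.1.1 x.1.2)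
      (fun k : Fin 2 => if k = 0 then c1 else c2))
  span_eq : Submodule.span ℂ
    ((Set.range fun p : ZMod 2 × (ℤ × ℤ) => t p.1 p.2) ∪ {c1, c2}) = ⊤
  bracket_tt : ∀ (i j : ZMod 2) (m n : ℤ × ℤ),
    ⁅t i m, t j n⁆ =
      (sgn m.1 j * q ^ (m.2 * n.1) - sgn n.1 i * q ^ (m.1 * n.2)) •
          t (i + j) (m.1 + n.1, m.2 + n.2) +
        (if i + j = 0 ∧ m + n = 0 then sgn m.1 j * q ^ (m.2 * n.1) else 0) •
          ((m.1 : ℂ) • c1 + (m.2 : ℂ) • c2)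
  c1_central : ∀ x : L, ⁅c1, x⁆ = 0
  c2_central : ∀ x : L, ⁅c2, x⁆ = 0

variable {q : ℂ} {L : Type} [LieRing L] [LieAlgebra ℂ L]

/-- The degree-`j` component of the ℤ-grading of `L` associated with the ℤ-basis
`{m₁, m₂}` of `ℤ²`. -/
def Lj (D : LData q L) (m₁ m₂ : ℤ × ℤ) (j : ℤ) : Submodule ℂ L :=
  Submodule.span ℂ
    ((Set.range fun p : ZMod 2 × ℤ => D.t p.1 (j • m₁ + p.2 • m₂)) ∪
      if j = 0 then {D.c1, D.c2} else ∅)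

/-- A ℤ-graded module structure on an `L`-module `V`. -/
structure GradedRep (D : LData q L) (m₁ m₂ : ℤ × ℤ) (V : Type) [AddCommGroup V]
    [Module ℂ V] [LieRingModule L V] [LieModule ℂ L V] where
  comp : ℤ → Submodule ℂ V
  internal : DirectSum.IsInternal comp
  lie_mem : ∀ (j k : ℤ), ∀ x ∈ Lj D m₁ m₂ j, ∀ v ∈ comp k, ⁅x, v⁆ ∈ comp (k + j)

variable {D : LData q L} {m₁ m₂ : ℤ × ℤ} {V : Type} [AddCommGroup V] [Module ℂ V]
  [LieRingModule L V] [LieModule ℂ L V]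

/-- A Lie submodule is graded if it is the sum of its homogeneous pieces. -/
def GradedRep.IsGradedSub (G : GradedRep D m₁ m₂ V) (N : LieSubmodule ℂ L V) : Prop :=
  (N : Submodule ℂ V) = ⨆ k : ℤ, (N : Submodule ℂ V) ⊓ G.comp k

/-- Irreducibility as a ℤ-graded module. -/
def GradedRep.IsIrreducible (G : GradedRep D m₁ m₂ V) : Prop :=
  (∃ v : V, v ≠ 0) ∧ ∀ N : LieSubmodule ℂ L V, G.IsGradedSub N → N = ⊥ ∨ N = ⊤

/-- Quasifiniteness: all homogeneous components are finite dimensional. -/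
def GradedRep.Quasifinite (G : GradedRep D m₁ m₂ V) : Prop :=
  ∀ k : ℤ, FiniteDimensional ℂ (G.comp k)

/-- Uniform boundedness of the dimensions of the homogeneous components. -/
def GradedRep.UniformlyBounded (G : GradedRep D m₁ m₂ V) : Prop :=
  ∃ N : ℕ, ∀ k : ℤ, Module.rank ℂ (G.comp k) ≤ (N : Cardinal)

/-- Generalized highest weight module corresponding to the ℤ-basis `{b1, b2}`. -/
def GradedRep.IsGHWFor (G : GradedRep D m₁ m₂ V) (b1 b2 : ℤ × ℤ) : Prop :=
  IsZBasis b1 b2 ∧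
    ∃ (dg : ℤ) (v : V), v ∈ G.comp dg ∧ v ≠ 0 ∧
      LieSubmodule.lieSpan ℂ L {v} = ⊤ ∧
      ∀ (a b : ℕ) (i : ZMod 2), ⁅D.t i ((a : ℤ) • b1 + (b : ℤ) • b2), v⁆ = 0

/-- Generalized highest weight module. -/
def GradedRep.IsGHW (G : GradedRep D m₁ m₂ V) : Prop := ∃ b1 b2 : ℤ × ℤ, G.IsGHWFor b1 b2

/-- Highest weight module. -/
def GradedRep.IsHW (G : GradedRep D m₁ m₂ V) : Prop :=
  ∃ (dg : ℤ) (v : V), v ∈ G.comp dg ∧ v ≠ 0 ∧ LieSubmodule.lieSpan ℂ L {v} = ⊤ ∧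
    ∀ j : ℤ, 0 < j → ∀ x ∈ Lj D m₁ m₂ j, ⁅x, v⁆ = 0

/-- Lowest weight module. -/
def GradedRep.IsLW (G : GradedRep D m₁ m₂ V) : Prop :=
  ∃ (dg : ℤ) (v : V), v ∈ G.comp dg ∧ v ≠ 0 ∧ LieSubmodule.lieSpan ℂ L {v} = ⊤ ∧
    ∀ j : ℤ, j < 0 → ∀ x ∈ Lj D m₁ m₂ j, ⁅x, v⁆ = 0

/-!
For `m₂.1` even every sign `(−1)^{m·i}` in the bracket of `t_0^i t^{j m₂}` and `t_0^k t^{l m₂}`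
is `1`, and the two powers `q^{j l m22 m21}`, `q^{j l m21 m22}` coincide, so the `t`-term
cancels and only the central term survives; it vanishes unless `j + l = 0`. Since `L₀` is
spanned by these elements together with the central `c1, c2`, its derived algebra lies in the
line through `m21 c1 + m22 c2`, and `[t^{m₂}, t^{−m₂}] = q^{−m21 m22} (m21 c1 + m22 c2)` with
`q ≠ 0` shows that this line is reached.
-/

theorem sgn_of_even {a : ℤ} (ha : Even a) (i : ZMod 2) : sgn a i = 1 := by
  unfold sgn
  split_ifs
  · rfl
  · exact ha.neg_one_zpow

theorem _root_.lie_mem_of_mem_span {R L : Type*} [CommRing R] [LieRing L] [LieAlgebra R L]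
    {s t : Set L} {N : Submodule R L} (hst : ∀ x ∈ s, ∀ y ∈ t, ⁅x, y⁆ ∈ N) {x y : L}
    (hx : x ∈ Submodule.span R s) (hy : y ∈ Submodule.span R t) : ⁅x, y⁆ ∈ N := by
  induction hx, hy using Submodule.span_induction₂ with
  | mem_mem x y hx hy => exact hst x hx y hy
  | zero_left y _ => simp
  | zero_right x _ => simp
  | add_left x y z _ _ _ hx hy => simpa [add_lie] using add_mem hx hy
  | add_right x y z _ _ _ hx hy => simpa [lie_add] using add_mem hx hy
  | smul_left r x y _ _ h => simpa [smul_lie] using N.smul_mem r h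
  | smul_right r x y _ _ h => simpa [lie_smul] using N.smul_mem r h

namespace LData

variable (D)

def central (m : ℤ × ℤ) : L := (m.1 : ℂ) • D.c1 + (m.2 : ℂ) • D.c2

theorem central_zsmul (j : ℤ) (m : ℤ × ℤ) : D.central (j • m) = (j : ℂ) • D.central m := by
  simp [central, smul_add, smul_smul]

theorem lie_t_t (i j : ZMod 2) (m n : ℤ × ℤ) :
    ⁅D.t i m, D.t j n⁆ =
      (sgn m.1 j * q ^ (m.2 * n.1) - sgn n.1 i * q ^ (m.1 * n.2)) •
          D.t (i + j) (m + n) +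
        (if i + j = 0 ∧ m + n = 0 then sgn m.1 j * q ^ (m.2 * n.1) else 0) • D.central m :=
  D.bracket_tt i j m n

theorem lie_t_zsmul_t_zsmul {m : ℤ × ℤ} (hm : Even m.1) (i k : ZMod 2) (j l : ℤ) :
    ⁅D.t i (j • m), D.t k (l • m)⁆ =
      (if i + k = 0 ∧ j + l = 0 then (j : ℂ) * q ^ (-(j ^ 2 * m.1 * m.2)) else 0) •
        D.central m := by
  rcases eq_or_ne m 0 with rfl | hm0
  · simp [lie_t_t, central, sgn]
  have hsum : j • m + l • m = 0 ↔ j + l = 0 := by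
    rw [← add_smul, smul_eq_zero, or_iff_left hm0]
  have hexp : j * m.2 * (l * m.1) = j * m.1 * (l * m.2) := by ring
  rw [lie_t_t]
  simp only [Prod.smul_fst, Prod.smul_snd, smul_eq_mul, sgn_of_even (hm.mul_left _), hsum,
    one_mul, hexp, sub_self, zero_smul, zero_add, central_zsmul]
  split_ifs with h
  · obtain rfl : l = -j := by linarith [h.2]
    rw [smul_smul, mul_comm, show j * m.1 * (-j * m.2) = -(j ^ 2 * m.1 * m.2) by ring]
  · simp

theorem lie_eq_zero_of_mem_center {x : L} (hx : x ∈ ({D.c1, D.c2} : Set L)) (y : L) :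
    ⁅x, y⁆ = 0 := by
  rcases hx with rfl | rfl
  exacts [D.c1_central y, D.c2_central y]

theorem central_eq_smul_lie {m : ℤ × ℤ} (hq : q ≠ 0) (hm : Even m.1) :
    D.central m = q ^ (m.1 * m.2) • ⁅D.t 0 ((1 : ℤ) • m), D.t 0 ((-1 : ℤ) • m)⁆ := by
  rw [D.lie_t_zsmul_t_zsmul hm, if_pos ⟨add_zero 0, add_neg_cancel 1⟩, smul_smul,
    Int.cast_one, one_mul, one_pow, one_mul, ← zpow_add₀ hq, add_neg_cancel, zpow_zero, one_smul]

end LData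

theorem Lj_zero (m₁ m₂ : ℤ × ℤ) :
    Lj D m₁ m₂ 0 = Submodule.span ℂ
      ((Set.range fun p : ZMod 2 × ℤ => D.t p.1 (p.2 • m₂)) ∪ {D.c1, D.c2}) := by
  simp [Lj]

theorem t_zsmul_mem_Lj_zero (m₁ m₂ : ℤ × ℤ) (i : ZMod 2) (j : ℤ) :
    D.t i (j • m₂) ∈ Lj D m₁ m₂ 0 := by
  rw [Lj_zero]
  exact Submodule.subset_span (Or.inl ⟨(i, j), rfl⟩)

theorem span_lie_Lj_zero_le (m₁ : ℤ × ℤ) {m₂ : ℤ × ℤ} (hm : Even m₂.1) :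
    Submodule.span ℂ {z : L | ∃ x ∈ Lj D m₁ m₂ 0, ∃ y ∈ Lj D m₁ m₂ 0, z = ⁅x, y⁆} ≤
      Submodule.span ℂ {D.central m₂} := by
  rw [Submodule.span_le]
  rintro _ ⟨x, hx, y, hy, rfl⟩
  rw [Lj_zero] at hx hy
  refine lie_mem_of_mem_span ?_ hx hy
  rintro _ (⟨⟨i, j⟩, rfl⟩ | hx) _ (⟨⟨k, l⟩, rfl⟩ | hy)
  · rw [D.lie_t_zsmul_t_zsmul hm]
    exact Submodule.smul_mem _ _ (Submodule.mem_span_singleton_self _)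
  · rw [← lie_skew, D.lie_eq_zero_of_mem_center hy, neg_zero]
    exact zero_mem _
  all_goals
    rw [D.lie_eq_zero_of_mem_center hx]
    exact zero_mem _

theorem L0_heisenberg_of_even_general (q : ℂ) (hq : Generic q)
    {L : Type} [LieRing L] [LieAlgebra ℂ L] (D : LData q L)
    (m₁ m₂ : ℤ × ℤ) (heven : Even m₂.1) :
    (∀ (i k : ZMod 2) (j l : ℤ),
      ⁅D.t i (j • m₂), D.t k (l • m₂)⁆ =
        (if i + k = 0 ∧ j + l = 0 then (j : ℂ) * q ^ (-(j ^ 2 * m₂.1 * m₂.2)) else 0) •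
          ((m₂.1 : ℂ) • D.c1 + (m₂.2 : ℂ) • D.c2)) ∧
    Submodule.span ℂ {z : L | ∃ x ∈ Lj D m₁ m₂ 0, ∃ y ∈ Lj D m₁ m₂ 0, z = ⁅x, y⁆} =
      Submodule.span ℂ {(m₂.1 : ℂ) • D.c1 + (m₂.2 : ℂ) • D.c2} := by
  refine ⟨D.lie_t_zsmul_t_zsmul heven, le_antisymm (span_lie_Lj_zero_le m₁ heven) ?_⟩
  rw [Submodule.span_le, Set.singleton_subset_iff]
  change D.central m₂ ∈ _
  rw [D.central_eq_smul_lie hq.1 heven]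
  exact Submodule.smul_mem _ _ (Submodule.subset_span
    ⟨_, t_zsmul_mem_Lj_zero m₁ m₂ 0 1, _, t_zsmul_mem_Lj_zero m₁ m₂ 0 (-1), rfl⟩)

/-- if `m21` is even, then
`[t_0^i t^{j m₂}, t_0^k t^{l m₂}] = δ_{i+k,0} δ_{j+l,0} j q^{−j² m21 m22} (m21 c1 + m22 c2)`,
and consequently the derived subalgebra of `L₀` is the span of the central element
`m21 c1 + m22 c2`, i.e. `L₀` is a Heisenberg Lie algebra. -/
theorem L0_heisenberg_of_even (q : ℂ) (hq : Generic q)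
    {L : Type} [LieRing L] [LieAlgebra ℂ L] (D : LData q L)
    (m₁ m₂ : ℤ × ℤ) (hb : IsZBasis m₁ m₂) (heven : Even m₂.1) :
    (∀ (i k : ZMod 2) (j l : ℤ),
      ⁅D.t i (j • m₂), D.t k (l • m₂)⁆ =
        (if i + k = 0 ∧ j + l = 0 then (j : ℂ) * q ^ (-(j ^ 2 * m₂.1 * m₂.2)) else 0) •
          ((m₂.1 : ℂ) • D.c1 + (m₂.2 : ℂ) • D.c2)) ∧
    Submodule.span ℂ {z : L | ∃ x ∈ Lj D m₁ m₂ 0, ∃ y ∈ Lj D m₁ m₂ 0, z = ⁅x, y⁆} =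
      Submodule.span ℂ {(m₂.1 : ℂ) • D.c1 + (m₂.2 : ℂ) • D.c2} :=
  L0_heisenberg_of_even_general q hq D m₁ m₂ heven

end QTorus
end
end

section
/- Let V be a nontrivial irreducible generalized highest weight ℤ-graded L-module whose generalized highest weight vector corresponds to the ℤ-basis {b1, b2} of ℤ². Then for every v ∈ V there exists p ∈ ℕ such that t_0^{i} t^{a b1 + b b2}·v = 0 for all integers a, b ≥ p and all i ∈ ℤ/2ℤ. -/
open scoped BigOperators

noncomputable section

namespace QTorus

variable {q : ℂ} {L : Type} [LieRing L] [LieAlgebra ℂ L]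

variable {D : LData q L} {m₁ m₂ : ℤ × ℤ} {V : Type} [AddCommGroup V] [Module ℂ V]
  [LieRingModule L V] [LieModule ℂ L V]

-- Even-case highest/lowest weight realizations
/-- `G` realizes `M^+(ψ, m₁, m₂)` with highest degree `d₀` (for `m₂.1` even; the linear
function `ψ` on `L₀` is recorded by its values `ψt i k = ψ(t_0^i t^{k m₂})`, `ψ1 = ψ(c1)`,
`ψ2 = ψ(c2)`). -/
def GradedRep.IsMplusEvenAt (G : GradedRep D m₁ m₂ V) (ψt : ZMod 2 → ℤ → ℂ) (ψ1 ψ2 : ℂ)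
    (d₀ : ℤ) : Prop :=
  G.IsIrreducible ∧ (∀ k : ℤ, d₀ < k → G.comp k = ⊥) ∧
    ∃ v : V, v ≠ 0 ∧ v ∈ G.comp d₀ ∧ G.comp d₀ = Submodule.span ℂ {v} ∧
      (∀ j : ℤ, 0 < j → ∀ x ∈ Lj D m₁ m₂ j, ⁅x, v⁆ = 0) ∧
      (∀ (i : ZMod 2) (k : ℤ), ⁅D.t i (k • m₂), v⁆ = ψt i k • v) ∧
      ⁅D.c1, v⁆ = ψ1 • v ∧ ⁅D.c2, v⁆ = ψ2 • v

def GradedRep.IsMplusEven (G : GradedRep D m₁ m₂ V) (ψt : ZMod 2 → ℤ → ℂ) (ψ1 ψ2 : ℂ) : Prop :=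
  ∃ d₀ : ℤ, G.IsMplusEvenAt ψt ψ1 ψ2 d₀

def GradedRep.IsMminusEvenAt (G : GradedRep D m₁ m₂ V) (ψt : ZMod 2 → ℤ → ℂ) (ψ1 ψ2 : ℂ)
    (d₀ : ℤ) : Prop :=
  G.IsIrreducible ∧ (∀ k : ℤ, k < d₀ → G.comp k = ⊥) ∧
    ∃ v : V, v ≠ 0 ∧ v ∈ G.comp d₀ ∧ G.comp d₀ = Submodule.span ℂ {v} ∧
      (∀ j : ℤ, j < 0 → ∀ x ∈ Lj D m₁ m₂ j, ⁅x, v⁆ = 0) ∧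
      (∀ (i : ZMod 2) (k : ℤ), ⁅D.t i (k • m₂), v⁆ = ψt i k • v) ∧
      ⁅D.c1, v⁆ = ψ1 • v ∧ ⁅D.c2, v⁆ = ψ2 • v

def GradedRep.IsMminusEven (G : GradedRep D m₁ m₂ V) (ψt : ZMod 2 → ℤ → ℂ) (ψ1 ψ2 : ℂ) : Prop :=
  ∃ d₀ : ℤ, G.IsMminusEvenAt ψt ψ1 ψ2 d₀

/-- An exp-polynomial linear function on `L₀` (case `m₂.1` even). -/
def ExpPolyEven (q : ℂ) (m₁ m₂ : ℤ × ℤ) (ψt : ZMod 2 → ℤ → ℂ) (ψ1 ψ2 : ℂ) : Prop :=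
  ∃ (r : ℕ) (sdeg : Fin r → ℕ) (b : Fin r → ℕ → ZMod 2 → ℂ) (A : Fin r → ℂ),
    1 ≤ r ∧ (∀ k, A k ≠ 0) ∧
    (∀ i : ℤ, i ≠ 0 → ∀ j : ZMod 2,
      ψt j i =
        (∑ k, (∑ l ∈ Finset.range (sdeg k + 1), b k l j * (i : ℂ) ^ l) * A k ^ i) /
          ((1 - sgn 1 j * q ^ (i * (m₁.1 * m₂.2 - m₁.2 * m₂.1))) *
            q ^ (i ^ 2 * (m₂.1 / 2) * m₂.2))) ∧
    ((m₁.1 : ℂ) * ψ1 + (m₁.2 : ℂ) * ψ2 = ∑ k, b k 0 0) ∧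
    (ψt 1 0 = (1 / 2) * ∑ k, b k 0 1)

-- sl2 representations and tensor products
/-- An `sl₂(ℂ)`-module structure on `W`: operators `e, f, h` satisfying the `sl₂` relations. -/
structure Sl2Rep (W : Type) [AddCommGroup W] [Module ℂ W] where
  e : Module.End ℂ W
  f : Module.End ℂ W
  h : Module.End ℂ W
  rel_he : h * e - e * h = (2 : ℂ) • e
  rel_hf : h * f - f * h = -((2 : ℂ) • f)
  rel_ef : e * f - f * e = h

/-- Irreducibility of an `sl₂(ℂ)`-module. -/
def Sl2Rep.Irreducible {W : Type} [AddCommGroup W] [Module ℂ W] (ρ : Sl2Rep W) : Prop :=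
  (∃ w : W, w ≠ 0) ∧ ∀ U : Submodule ℂ W,
    (∀ w ∈ U, ρ.e w ∈ U ∧ ρ.f w ∈ U ∧ ρ.h w ∈ U) → U = ⊥ ∨ U = ⊤

/-- The tensor product `V_1 ⊗ ⋯ ⊗ V_ν` with `V_i = ℂ^{d i}`. -/
abbrev Tens {ν : ℕ} (d : Fin ν → ℕ) : Type := PiTensorProduct ℂ (fun i => Fin (d i) → ℂ)

/-- The operator `id ⊗ ⋯ ⊗ φ ⊗ ⋯ ⊗ id` acting in the `i`-th tensor factor. -/
def inFactor {ν : ℕ} (d : Fin ν → ℕ) (i : Fin ν)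
    (φ : (Fin (d i) → ℂ) →ₗ[ℂ] (Fin (d i) → ℂ)) : Tens d →ₗ[ℂ] Tens d :=
  PiTensorProduct.map (Function.update (fun j => LinearMap.id) i φ)

/-- Action of `t_0^1 t^{2j m₂}` on `V(μ, ψ)`. -/
def hAct (q : ℂ) (m₂ : ℤ × ℤ) {ν : ℕ} (μ : Fin ν → ℂ) (d : Fin ν → ℕ)
    (ρ : ∀ i, Sl2Rep (Fin (d i) → ℂ)) (j : ℤ) : Tens d →ₗ[ℂ] Tens d :=
  (-(q ^ (-(2 * j ^ 2 * m₂.2 * m₂.1)))) • ∑ i : Fin ν, μ i ^ j • inFactor d i (ρ i).h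

/-- Action of `t_0^k t^{(2j+1) m₂}` on `V(μ, ψ)`; here `s` is a square root of `q`, so that
`s^{-(2j+1)² m22 m21} = q^{-(1/2)(2j+1)² m22 m21}`. -/
def oddAct (s : ℂ) (m₂ : ℤ × ℤ) {ν : ℕ} (μ : Fin ν → ℂ) (d : Fin ν → ℕ)
    (ρ : ∀ i, Sl2Rep (Fin (d i) → ℂ)) (k : ZMod 2) (j : ℤ) : Tens d →ₗ[ℂ] Tens d :=
  s ^ (-((2 * j + 1) ^ 2 * m₂.2 * m₂.1)) •
    (sgn 1 k • ∑ i : Fin ν, μ i ^ j • inFactor d i (ρ i).e +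
      ∑ i : Fin ν, μ i ^ (j + 1) • inFactor d i (ρ i).f)

/-- `G` realizes `M^+(μ, ψ, m₁, m₂)` with highest degree `d₀` (case `m₂.1` odd): the top
homogeneous component is a copy of `V(μ, ψ) = V_1 ⊗ ⋯ ⊗ V_ν` with its `L₀`-action,
killed by `L_+`, and `G` is irreducible ℤ-graded.  The linear function `ψ` is recorded via
`ψA j = ψ(t_0^0 t^{2j m₂})`, `ψβ = ψ(β)` and `ψc = ψ(m21 c1 + m22 c2)`. -/
def GradedRep.IsMplusOddAt (G : GradedRep D m₁ m₂ V) (s : ℂ) {ν : ℕ} (μ : Fin ν → ℂ)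
    (d : Fin ν → ℕ) (ρ : ∀ i, Sl2Rep (Fin (d i) → ℂ)) (ψA : ℤ → ℂ) (ψβ ψc : ℂ)
    (d₀ : ℤ) : Prop :=
  G.IsIrreducible ∧ (∀ k : ℤ, d₀ < k → G.comp k = ⊥) ∧
    ∃ ι : Tens d →ₗ[ℂ] V, Function.Injective ι ∧ LinearMap.range ι = G.comp d₀ ∧
      (∀ j : ℤ, 0 < j → ∀ x ∈ Lj D m₁ m₂ j, ∀ w : Tens d, ⁅x, ι w⁆ = 0) ∧
      (∀ (j : ℤ) (w : Tens d), ⁅D.t 0 ((2 * j) • m₂), ι w⁆ = ψA j • ι w) ∧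
      (∀ (j : ℤ) (w : Tens d), ⁅D.t 1 ((2 * j) • m₂), ι w⁆ = ι (hAct q m₂ μ d ρ j w)) ∧
      (∀ (k : ZMod 2) (j : ℤ) (w : Tens d),
        ⁅D.t k ((2 * j + 1) • m₂), ι w⁆ = ι (oddAct s m₂ μ d ρ k j w)) ∧
      (∀ w : Tens d, ⁅(m₂.1 : ℂ) • D.c1 + (m₂.2 : ℂ) • D.c2, ι w⁆ = ψc • ι w) ∧
      (∀ w : Tens d, ⁅(m₁.1 : ℂ) • D.c1 + (m₁.2 : ℂ) • D.c2, ι w⁆ = ψβ • ι w)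

def GradedRep.IsMplusOdd (G : GradedRep D m₁ m₂ V) (s : ℂ) {ν : ℕ} (μ : Fin ν → ℂ)
    (d : Fin ν → ℕ) (ρ : ∀ i, Sl2Rep (Fin (d i) → ℂ)) (ψA : ℤ → ℂ) (ψβ ψc : ℂ) : Prop :=
  ∃ d₀ : ℤ, G.IsMplusOddAt s μ d ρ ψA ψβ ψc d₀

def GradedRep.IsMminusOddAt (G : GradedRep D m₁ m₂ V) (s : ℂ) {ν : ℕ} (μ : Fin ν → ℂ)
    (d : Fin ν → ℕ) (ρ : ∀ i, Sl2Rep (Fin (d i) → ℂ)) (ψA : ℤ → ℂ) (ψβ ψc : ℂ)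
    (d₀ : ℤ) : Prop :=
  G.IsIrreducible ∧ (∀ k : ℤ, k < d₀ → G.comp k = ⊥) ∧
    ∃ ι : Tens d →ₗ[ℂ] V, Function.Injective ι ∧ LinearMap.range ι = G.comp d₀ ∧
      (∀ j : ℤ, j < 0 → ∀ x ∈ Lj D m₁ m₂ j, ∀ w : Tens d, ⁅x, ι w⁆ = 0) ∧
      (∀ (j : ℤ) (w : Tens d), ⁅D.t 0 ((2 * j) • m₂), ι w⁆ = ψA j • ι w) ∧
      (∀ (j : ℤ) (w : Tens d), ⁅D.t 1 ((2 * j) • m₂), ι w⁆ = ι (hAct q m₂ μ d ρ j w)) ∧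
      (∀ (k : ZMod 2) (j : ℤ) (w : Tens d),
        ⁅D.t k ((2 * j + 1) • m₂), ι w⁆ = ι (oddAct s m₂ μ d ρ k j w)) ∧
      (∀ w : Tens d, ⁅(m₂.1 : ℂ) • D.c1 + (m₂.2 : ℂ) • D.c2, ι w⁆ = ψc • ι w) ∧
      (∀ w : Tens d, ⁅(m₁.1 : ℂ) • D.c1 + (m₁.2 : ℂ) • D.c2, ι w⁆ = ψβ • ι w)

def GradedRep.IsMminusOdd (G : GradedRep D m₁ m₂ V) (s : ℂ) {ν : ℕ} (μ : Fin ν → ℂ)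
    (d : Fin ν → ℕ) (ρ : ∀ i, Sl2Rep (Fin (d i) → ℂ)) (ψA : ℤ → ℂ) (ψβ ψc : ℂ) : Prop :=
  ∃ d₀ : ℤ, G.IsMminusOddAt s μ d ρ ψA ψβ ψc d₀

/-- An exp-polynomial linear function on `𝒜 ⊕ ℂβ` (case `m₂.1` odd). -/
def ExpPolyOdd (q : ℂ) (m₁ m₂ : ℤ × ℤ) (ψA : ℤ → ℂ) (ψβ : ℂ) : Prop :=
  ∃ (r : ℕ) (sdeg : Fin r → ℕ) (b : Fin r → ℕ → ℂ) (A : Fin r → ℂ),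
    1 ≤ r ∧ (∀ k, A k ≠ 0) ∧
    (∀ i : ℤ, i ≠ 0 →
      ψA i = (∑ k, (∑ l ∈ Finset.range (sdeg k + 1), b k l * (i : ℂ) ^ l) * A k ^ i) /
        ((1 - q ^ (2 * i * (m₁.1 * m₂.2 - m₁.2 * m₂.1))) * q ^ (2 * i ^ 2 * m₂.1 * m₂.2))) ∧
    ψβ = ∑ k, b k 0

end QTorus

/-! The vectors `w` killed by every `t_0^i t^{a b1 + b b2}` with `a, b ≥ p`, for some `p`
depending on `w`, form a submodule. It is stable under `L`: the central elements commute with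
everything, and by the Leibniz rule `t_0^j t^n` maps it into itself after enlarging `p` by the
coordinates of `n`, because `[t_0^i t^m, t_0^j t^n]` is a multiple of `t_0^{i+j} t^{m+n}`
when `m + n ≠ 0`. The generating vector lies in it, so it is all of `V`. -/

theorem Submodule.lie_mem_of_span_eq_top {R L M : Type*} [CommRing R] [LieRing L]
    [LieAlgebra R L] [AddCommGroup M] [Module R M] [LieRingModule L M] [LieModule R L M]
    {S : Set L} (hS : Submodule.span R S = ⊤) {N : Submodule R M}
    (hN : ∀ y ∈ S, ∀ w ∈ N, ⁅y, w⁆ ∈ N) (x : L) {w : M} (hw : w ∈ N) : ⁅x, w⁆ ∈ N := by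
  have hx : x ∈ Submodule.span R S := hS ▸ Submodule.mem_top
  induction hx using Submodule.span_induction with
  | mem y hy => exact hN y hy w hw
  | zero => rw [zero_lie]; exact N.zero_mem
  | add y z _ _ hy hz => rw [add_lie]; exact N.add_mem hy hz
  | smul c y _ hy => rw [smul_lie]; exact N.smul_mem c hy

namespace QTorus

theorem IsZBasis.exists_eq_smul_add_smul {b1 b2 : ℤ × ℤ} (hb : IsZBasis b1 b2) (n : ℤ × ℤ) :
    ∃ x y : ℤ, n = x • b1 + y • b2 := by
  rcases hb with h | h
  · refine ⟨n.1 * b2.2 - n.2 * b2.1, b1.1 * n.2 - b1.2 * n.1, Prod.ext ?_ ?_⟩ <;>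
      simp only [Prod.fst_add, Prod.snd_add, Prod.smul_fst, Prod.smul_snd, smul_eq_mul]
    · linear_combination (-n.1) * h
    · linear_combination (-n.2) * h
  · refine ⟨n.2 * b2.1 - n.1 * b2.2, b1.2 * n.1 - b1.1 * n.2, Prod.ext ?_ ?_⟩ <;>
      simp only [Prod.fst_add, Prod.snd_add, Prod.smul_fst, Prod.smul_snd, smul_eq_mul]
    · linear_combination n.1 * h
    · linear_combination n.2 * h

theorem IsZBasis.smul_add_smul_ne_zero {b1 b2 : ℤ × ℤ} (hb : IsZBasis b1 b2) {x : ℤ}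
    (hx : x ≠ 0) (y : ℤ) : x • b1 + y • b2 ≠ 0 := by
  intro h
  obtain ⟨h1, h2⟩ := Prod.ext_iff.mp h
  simp only [Prod.fst_add, Prod.snd_add, Prod.smul_fst, Prod.smul_snd, smul_eq_mul,
    Prod.fst_zero, Prod.snd_zero] at h1 h2
  have hdet : x * (b1.1 * b2.2 - b1.2 * b2.1) = 0 := by
    linear_combination b2.2 * h1 - b2.1 * h2
  rcases hb with h | h <;> rw [h] at hdet <;> omega

section EventuallyAnnihilated

variable {q : ℂ} {L : Type} [LieRing L] [LieAlgebra ℂ L] (D : LData q L) {b1 b2 : ℤ × ℤ}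
  {V : Type} [AddCommGroup V] [Module ℂ V] [LieRingModule L V] [LieModule ℂ L V]

-- The central term of `bracket_tt` only occurs in total degree `0`.
theorem LData.exists_lie_t_eq_smul_t (hb : IsZBasis b1 b2) (i j : ZMod 2) {a x : ℤ}
    (hax : a + x ≠ 0) (b y : ℤ) :
    ∃ c : ℂ, ⁅D.t i (a • b1 + b • b2), D.t j (x • b1 + y • b2)⁆ =
      c • D.t (i + j) ((a + x) • b1 + (b + y) • b2) := by
  have hsum : a • b1 + b • b2 + (x • b1 + y • b2) = (a + x) • b1 + (b + y) • b2 := by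
    module
  rw [D.bracket_tt, if_neg fun h => hb.smul_add_smul_ne_zero hax (b + y) (hsum ▸ h.2),
    zero_smul, add_zero, ← hsum]
  exact ⟨_, rfl⟩

variable (b1 b2 V) in
def eventuallyAnnihilated : Submodule ℂ V where
  carrier := {w | ∃ p : ℕ, ∀ a b : ℤ, (p : ℤ) ≤ a → (p : ℤ) ≤ b →
    ∀ i : ZMod 2, ⁅D.t i (a • b1 + b • b2), w⁆ = 0}
  zero_mem' := ⟨0, fun _ _ _ _ _ => lie_zero _⟩
  add_mem' := by
    rintro v w ⟨p, hp⟩ ⟨r, hr⟩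
    refine ⟨max p r, fun a b ha hb i => ?_⟩
    rw [lie_add, hp a b (by omega) (by omega) i, hr a b (by omega) (by omega) i, add_zero]
  smul_mem' := by
    rintro c w ⟨p, hp⟩
    exact ⟨p, fun a b ha hb i => by rw [lie_smul, hp a b ha hb i, smul_zero]⟩

theorem t_lie_mem_eventuallyAnnihilated (hb : IsZBasis b1 b2) (j : ZMod 2) (n : ℤ × ℤ)
    {w : V} (hw : w ∈ eventuallyAnnihilated D b1 b2 V) :
    ⁅D.t j n, w⁆ ∈ eventuallyAnnihilated D b1 b2 V := by
  obtain ⟨p, hp⟩ := hw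
  obtain ⟨x, y, rfl⟩ := hb.exists_eq_smul_add_smul n
  refine ⟨p + 1 + x.natAbs + y.natAbs, fun a b ha hb' i => ?_⟩
  obtain ⟨c, hc⟩ := D.exists_lie_t_eq_smul_t hb i j (a := a) (x := x) (by omega) b y
  rw [leibniz_lie, hc, hp a b (by omega) (by omega) i, lie_zero, add_zero, smul_lie,
    hp (a + x) (b + y) (by omega) (by omega) (i + j), smul_zero]

theorem lie_mem_eventuallyAnnihilated_of_central {c : L} (hc : ∀ z : L, ⁅c, z⁆ = 0)
    {w : V} (hw : w ∈ eventuallyAnnihilated D b1 b2 V) :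
    ⁅c, w⁆ ∈ eventuallyAnnihilated D b1 b2 V := by
  obtain ⟨p, hp⟩ := hw
  refine ⟨p, fun a b ha hb i => ?_⟩
  rw [leibniz_lie, hp a b ha hb i, lie_zero, add_zero, ← lie_skew, hc, neg_zero, zero_lie]

theorem lie_mem_eventuallyAnnihilated (hb : IsZBasis b1 b2) (x : L) {w : V}
    (hw : w ∈ eventuallyAnnihilated D b1 b2 V) :
    ⁅x, w⁆ ∈ eventuallyAnnihilated D b1 b2 V := by
  refine Submodule.lie_mem_of_span_eq_top D.span_eq (fun y hy w hw => ?_) x hw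
  rcases hy with ⟨⟨j, n⟩, rfl⟩ | rfl | rfl
  · exact t_lie_mem_eventuallyAnnihilated D hb j n hw
  · exact lie_mem_eventuallyAnnihilated_of_central D D.c1_central hw
  · exact lie_mem_eventuallyAnnihilated_of_central D D.c2_central hw

theorem eventuallyAnnihilated_eq_top (hb : IsZBasis b1 b2) {v : V}
    (hv : v ∈ eventuallyAnnihilated D b1 b2 V) (hspan : LieSubmodule.lieSpan ℂ L {v} = ⊤) :
    eventuallyAnnihilated D b1 b2 V = ⊤ := by
  let N : LieSubmodule ℂ L V :=
    { eventuallyAnnihilated D b1 b2 V with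
      lie_mem := fun hw => lie_mem_eventuallyAnnihilated D hb _ hw }
  have hN : N = ⊤ :=
    top_unique (hspan ▸ LieSubmodule.lieSpan_le.mpr (Set.singleton_subset_iff.mpr hv))
  exact congrArg LieSubmodule.toSubmodule hN

end EventuallyAnnihilated

theorem GHW_eventually_annihilates_general (q : ℂ)
    {L : Type} [LieRing L] [LieAlgebra ℂ L] (D : LData q L)
    (m₁ m₂ : ℤ × ℤ)
    {V : Type} [AddCommGroup V] [Module ℂ V] [LieRingModule L V] [LieModule ℂ L V]
    (G : GradedRep D m₁ m₂ V)
    (b1 b2 : ℤ × ℤ) (hghw : G.IsGHWFor b1 b2) :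
    ∀ w : V, ∃ p : ℕ, ∀ a b : ℤ, (p : ℤ) ≤ a → (p : ℤ) ≤ b →
      ∀ i : ZMod 2, ⁅D.t i (a • b1 + b • b2), w⁆ = 0 := by
  obtain ⟨hb, -, v, -, -, hspan, hkill⟩ := hghw
  have hv : v ∈ eventuallyAnnihilated D b1 b2 V := by
    refine ⟨0, fun a b ha hb' i => ?_⟩
    lift a to ℕ using ha
    lift b to ℕ using hb'
    exact hkill a b i
  intro w
  have hw : w ∈ eventuallyAnnihilated D b1 b2 V :=
    eventuallyAnnihilated_eq_top D hb hv hspan ▸ Submodule.mem_top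
  exact hw

/-- in a nontrivial irreducible generalized highest weight ℤ-graded
`L`-module corresponding to the ℤ-basis `{b1, b2}`, every vector is annihilated by all
`t_0^i t^{a b1 + b b2}` with `a, b` large enough. -/
theorem GHW_eventually_annihilates (q : ℂ) (hq : Generic q)
    {L : Type} [LieRing L] [LieAlgebra ℂ L] (D : LData q L)
    (m₁ m₂ : ℤ × ℤ) (hb : IsZBasis m₁ m₂)
    {V : Type} [AddCommGroup V] [Module ℂ V] [LieRingModule L V] [LieModule ℂ L V]
    (G : GradedRep D m₁ m₂ V) (hirr : G.IsIrreducible)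
    (hnt : ∃ (x : L) (w : V), ⁅x, w⁆ ≠ 0)
    (b1 b2 : ℤ × ℤ) (hghw : G.IsGHWFor b1 b2) :
    ∀ w : V, ∃ p : ℕ, ∀ a b : ℤ, (p : ℤ) ≤ a → (p : ℤ) ≤ b →
      ∀ i : ZMod 2, ⁅D.t i (a • b1 + b • b2), w⁆ = 0 :=
  GHW_eventually_annihilates_general q D m₁ m₂ G b1 b2 hghw

end QTorus
end
end

section
/- Let V be a nontrivial irreducible generalized highest weight ℤ-graded L-module whose generalized highest weight vector corresponds to the ℤ-basis {b1, b2} of ℤ². Then for every nonzero v ∈ V, all positive integers a, b, and every i ∈ ℤ/2ℤ, one has t_0^{i} t^{−a b1 − b b2}·v ≠ 0. -/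
open scoped BigOperators

noncomputable section

namespace QTorus

variable {q : ℂ} {L : Type} [LieRing L] [LieAlgebra ℂ L]

variable {D : LData q L} {m₁ m₂ : ℤ × ℤ} {V : Type} [AddCommGroup V] [Module ℂ V]
  [LieRingModule L V] [LieModule ℂ L V]

/-! Suppose `t_0^i t^d` kills `w ≠ 0`, where `d = −a b1 − b b2`. Every vector, in particular `w`,
is killed by `t_0^j t^n` for all `n = r b1 + s b2` with `r, s` large, because the generalized
highest weight vector is and this property survives the action of `L`. Bracketing `k` times with
`t_0^i t^d` carries this to every `n` not parallel to `d`: for generic `q` the structure constant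
`±q^{n₂ m₁} ∓ q^{n₁ m₂}` of `[t^n, t^m]` vanishes only when `n, m` are parallel. One more bracket
reaches the nonzero `n` parallel to `d`, and `c1`, `c2`, `t_0^1 t^0` are brackets of such
elements, so `L` kills `w`. The vectors killed by `L` form a graded submodule; irreducibility and
nontriviality force it to be zero. -/

open Filter

def ofCoords (b1 b2 : ℤ × ℤ) : ℤ × ℤ →+ ℤ × ℤ :=
  (zmultiplesHom _ b1).coprod (zmultiplesHom _ b2)

@[simp]
lemma ofCoords_apply (b1 b2 x : ℤ × ℤ) : ofCoords b1 b2 x = x.1 • b1 + x.2 • b2 := rfl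

lemma detZ_ofCoords (b1 b2 x y : ℤ × ℤ) :
    detZ (ofCoords b1 b2 x) (ofCoords b1 b2 y) = detZ x y * detZ b1 b2 := by
  simp only [detZ, ofCoords_apply, Prod.fst_add, Prod.snd_add, Prod.smul_fst, Prod.smul_snd,
    smul_eq_mul]
  ring

lemma detZ_self (m : ℤ × ℤ) : detZ m m = 0 := by
  simp only [detZ]; ring

lemma detZ_self_neg (m : ℤ × ℤ) : detZ m (-m) = 0 := by
  simp only [detZ, Prod.fst_neg, Prod.snd_neg]; ring

lemma detZ_sub_left (m n d : ℤ × ℤ) : detZ (m - n) d = detZ m d - detZ n d := by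
  simp only [detZ, Prod.fst_sub, Prod.snd_sub]; ring

lemma detZ_sub_right (m n d : ℤ × ℤ) : detZ d (m - n) = detZ d m - detZ d n := by
  simp only [detZ, Prod.fst_sub, Prod.snd_sub]; ring

/-- Cramer's rule in `ℤ²`. -/
lemma detZ_smul_eq (e d n : ℤ × ℤ) : detZ e d • n = detZ n d • e + detZ e n • d := by
  ext <;> simp only [detZ, Prod.smul_fst, Prod.smul_snd, Prod.fst_add, Prod.snd_add,
    smul_eq_mul] <;> ring

lemma exists_detZ_ne_zero {d : ℤ × ℤ} (hd : d ≠ 0) : ∃ e, detZ e d ≠ 0 := by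
  by_contra! h
  have h1 := h (1, 0)
  have h2 := h (0, 1)
  simp only [detZ] at h1 h2
  exact hd (Prod.ext (by simp; linarith) (by simp; linarith))

lemma detZ_ne_zero_of_detZ_eq_zero {e d n : ℤ × ℤ} (hed : detZ e d ≠ 0) (hnd : detZ n d = 0)
    (hn : n ≠ 0) : detZ e n ≠ 0 := by
  intro hen
  have := detZ_smul_eq e d n
  rw [hnd, hen, zero_smul, zero_smul, add_zero] at this
  exact hn ((smul_eq_zero.mp this).resolve_left hed)

namespace IsZBasis

variable {b1 b2 : ℤ × ℤ}

lemma detZ_ne_zero (h : IsZBasis b1 b2) : detZ b1 b2 ≠ 0 := by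
  rcases h with h | h <;> simp [detZ, h]

lemma ofCoords_surjective (h : IsZBasis b1 b2) : Function.Surjective (ofCoords b1 b2) := by
  intro n
  rcases h with hd | hd
  · refine ⟨(n.1 * b2.2 - n.2 * b2.1, b1.1 * n.2 - b1.2 * n.1), Prod.ext ?_ ?_⟩ <;>
      simp only [ofCoords_apply, Prod.fst_add, Prod.snd_add, Prod.smul_fst, Prod.smul_snd,
        smul_eq_mul]
    · linear_combination n.1 * hd
    · linear_combination n.2 * hd
  · refine ⟨(b2.1 * n.2 - b2.2 * n.1, b1.2 * n.1 - b1.1 * n.2), Prod.ext ?_ ?_⟩ <;>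
      simp only [ofCoords_apply, Prod.fst_add, Prod.snd_add, Prod.smul_fst, Prod.smul_snd,
        smul_eq_mul]
    · linear_combination (-n.1) * hd
    · linear_combination (-n.2) * hd

lemma ofCoords_injective (h : IsZBasis b1 b2) : Function.Injective (ofCoords b1 b2) := by
  refine (injective_iff_map_eq_zero _).mpr fun x hx => ?_
  have h1 := detZ_ofCoords b1 b2 x (0, 1)
  have h2 := detZ_ofCoords b1 b2 (1, 0) x
  rw [hx] at h1 h2
  have hdet := h.detZ_ne_zero
  simp only [detZ, Prod.fst_zero, Prod.snd_zero] at h1 h2 hdet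
  exact Prod.ext (by simpa [hdet] using h1) (by simpa [hdet] using h2)

end IsZBasis

lemma tendsto_add_nsmul_atTop {y : ℤ × ℤ} (hy1 : 0 < y.1) (hy2 : 0 < y.2) (x : ℤ × ℤ) :
    Tendsto (fun k : ℕ => x + k • y) atTop atTop := by
  rw [← prod_atTop_atTop_eq, tendsto_prod_iff']
  exact ⟨tendsto_atTop_add_const_left _ _ (tendsto_id.atTop_nsmul_const hy1),
    tendsto_atTop_add_const_left _ _ (tendsto_id.atTop_nsmul_const hy2)⟩

lemma sgn_mul_self (a : ℤ) (i : ZMod 2) : sgn a i * sgn a i = 1 := by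
  unfold sgn
  split_ifs
  · ring
  · rw [← mul_zpow]; norm_num

lemma Generic.sgn_mul_zpow_sub_ne_zero (hq : Generic q) (a b : ℤ) (i j : ZMod 2) {α β : ℤ}
    (h : α ≠ β) : sgn a i * q ^ α - sgn b j * q ^ β ≠ 0 := by
  intro he
  have hsq : (sgn a i * q ^ α) * (sgn a i * q ^ α) = (sgn b j * q ^ β) * (sgn b j * q ^ β) := by
    rw [sub_eq_zero.mp he]
  have hpow : q ^ (α + α - (β + β)) = 1 := by
    rw [zpow_sub₀ hq.1, zpow_add₀ hq.1, zpow_add₀ hq.1, div_eq_one_iff_eq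
      (mul_ne_zero (zpow_ne_zero _ hq.1) (zpow_ne_zero _ hq.1))]
    linear_combination hsq + (q ^ β * q ^ β) * sgn_mul_self b j
      - (q ^ α * q ^ α) * sgn_mul_self a i
  exact hq.2 _ (by omega) hpow

namespace LData

variable (D : LData q L)

lemma lie_t_t_of_add_ne_zero {m n : ℤ × ℤ} (h : m + n ≠ 0) (i j : ZMod 2) :
    ⁅D.t i m, D.t j n⁆ =
      (sgn m.1 j * q ^ (m.2 * n.1) - sgn n.1 i * q ^ (m.1 * n.2)) • D.t (i + j) (m + n) := by
  rw [D.bracket_tt, if_neg fun h' => h h'.2, zero_smul, add_zero]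
  rfl

lemma lie_t_t_neg_fst : ⁅D.t 0 (1, 0), D.t 0 (-1, 0)⁆ = D.c1 := by
  rw [D.bracket_tt]
  simp [sgn, D.t00]

lemma lie_t_t_neg_snd : ⁅D.t 0 (0, 1), D.t 0 (0, -1)⁆ = D.c2 := by
  rw [D.bracket_tt]
  simp [sgn, D.t00]

lemma lie_t_t_one_neg_fst : ⁅D.t 0 (1, 0), D.t 1 (-1, 0)⁆ = (-2 : ℂ) • D.t 1 0 := by
  rw [D.bracket_tt]
  norm_num [sgn]
  rfl

lemma lie_mem_of_generators (N : Submodule ℂ V) {u : V} (ht : ∀ i n, ⁅D.t i n, u⁆ ∈ N)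
    (hc1 : ⁅D.c1, u⁆ ∈ N) (hc2 : ⁅D.c2, u⁆ ∈ N) (x : L) : ⁅x, u⁆ ∈ N := by
  have hx : x ∈ Submodule.span ℂ
      ((Set.range fun p : ZMod 2 × (ℤ × ℤ) => D.t p.1 p.2) ∪ {D.c1, D.c2}) := by
    rw [D.span_eq]; trivial
  induction hx using Submodule.span_induction with
  | mem y hy =>
    rcases hy with ⟨⟨i, n⟩, rfl⟩ | rfl | rfl
    exacts [ht i n, hc1, hc2]
  | zero => simp
  | add y z _ _ hy hz => rw [add_lie]; exact N.add_mem hy hz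
  | smul c y _ hy => rw [smul_lie]; exact N.smul_mem c hy

end LData

lemma LData.mem_maxTrivSubmodule_of_generators {u : V} (ht : ∀ i n, ⁅D.t i n, u⁆ = 0)
    (hc1 : ⁅D.c1, u⁆ = 0) (hc2 : ⁅D.c2, u⁆ = 0) : u ∈ LieModule.maxTrivSubmodule ℂ L V :=
  (LieModule.mem_maxTrivSubmodule ℂ L V u).mpr fun x => by
    simpa using D.lie_mem_of_generators ⊥ (by simpa using ht) (by simpa using hc1)
      (by simpa using hc2) x

lemma lie_t_add_eq_zero (hq : Generic q) {u : V} {i j : ZMod 2} {X Y : ℤ × ℤ}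
    (hXY : detZ X Y ≠ 0) (hX : ⁅D.t i X, u⁆ = 0) (hY : ⁅D.t j Y, u⁆ = 0) :
    ⁅D.t (i + j) (X + Y), u⁆ = 0 := by
  have hsum : X + Y ≠ 0 := fun h =>
    hXY (by rw [eq_neg_of_add_eq_zero_right h, detZ_self_neg])
  have hbr : ⁅⁅D.t i X, D.t j Y⁆, u⁆ = 0 := by
    rw [lie_lie, hX, hY, lie_zero, lie_zero, sub_zero]
  rw [D.lie_t_t_of_add_ne_zero hsum, smul_lie] at hbr
  refine (smul_eq_zero.mp hbr).resolve_left (hq.sgn_mul_zpow_sub_ne_zero _ _ _ _ fun h => ?_)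
  exact hXY (by unfold detZ; linear_combination -h)

lemma lie_t_eq_zero_of_lie_t_sub_nsmul (hq : Generic q) {w : V} {i : ZMod 2} {d : ℤ × ℤ}
    (hd : ⁅D.t i d, w⁆ = 0) (k : ℕ) {n : ℤ × ℤ} (hn : detZ n d ≠ 0)
    (hk : ∀ j, ⁅D.t j (n - k • d), w⁆ = 0) (j : ZMod 2) : ⁅D.t j n, w⁆ = 0 := by
  induction k generalizing n j with
  | zero => simpa using hk j
  | succ k ih =>
    have hnd : detZ (n - d) d ≠ 0 := by rwa [detZ_sub_left, detZ_self, sub_zero]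
    have hprev := ih hnd (fun j => by rw [sub_sub, ← succ_nsmul']; exact hk j) (j + i)
    have h := lie_t_add_eq_zero hq hnd hprev hd
    rwa [sub_add_cancel, add_assoc, CharTwo.add_self_eq_zero, add_zero] at h

lemma lie_t_eq_zero_of_ne_zero (hq : Generic q) {w : V} {d : ℤ × ℤ} (hd : d ≠ 0)
    (h : ∀ n, detZ n d ≠ 0 → ∀ j, ⁅D.t j n, w⁆ = 0) {n : ℤ × ℤ} (hn : n ≠ 0) (j : ZMod 2) :
    ⁅D.t j n, w⁆ = 0 := by
  by_cases hnd : detZ n d = 0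
  · obtain ⟨e, he⟩ := exists_detZ_ne_zero hd
    have hsplit := lie_t_add_eq_zero hq (i := 0) (j := j) (X := e) (Y := n - e)
      (by rw [detZ_sub_right, detZ_self, sub_zero]; exact detZ_ne_zero_of_detZ_eq_zero he hnd hn)
      (h e he 0) (h (n - e) (by rwa [detZ_sub_left, hnd, zero_sub, neg_ne_zero]) j)
    rwa [zero_add, add_sub_cancel] at hsplit
  · exact h n hnd j

lemma mem_maxTrivSubmodule_of_lie_t_eq_zero {w : V} (h : ∀ n ≠ 0, ∀ j, ⁅D.t j n, w⁆ = 0) :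
    w ∈ LieModule.maxTrivSubmodule ℂ L V := by
  have hbr {x y : L} (hx : ⁅x, w⁆ = 0) (hy : ⁅y, w⁆ = 0) : ⁅⁅x, y⁆, w⁆ = 0 := by
    rw [lie_lie, hx, hy, lie_zero, lie_zero, sub_zero]
  have ht10 : ⁅D.t 1 0, w⁆ = 0 := by
    have := hbr (h (1, 0) (by simp) 0) (h (-1, 0) (by simp) 1)
    rwa [D.lie_t_t_one_neg_fst, smul_lie, smul_eq_zero, or_iff_right (by norm_num)] at this
  refine D.mem_maxTrivSubmodule_of_generators (fun i n => ?_)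
    (D.lie_t_t_neg_fst ▸ hbr (h _ (by simp) 0) (h _ (by simp) 0))
    (D.lie_t_t_neg_snd ▸ hbr (h _ (by simp) 0) (h _ (by simp) 0))
  rcases eq_or_ne n 0 with rfl | hn
  · fin_cases i
    · exact (congrArg (⁅·, w⁆) D.t00).trans (zero_lie w)
    · exact ht10
  · exact h n hn i

lemma LData.t_mem_Lj (hb : IsZBasis m₁ m₂) (i : ZMod 2) (n : ℤ × ℤ) :
    ∃ j, D.t i n ∈ Lj D m₁ m₂ j := by
  obtain ⟨x, rfl⟩ := hb.ofCoords_surjective n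
  exact ⟨x.1, Submodule.subset_span (Or.inl ⟨(i, x.2), rfl⟩)⟩

lemma LData.c1_mem_Lj_zero : D.c1 ∈ Lj D m₁ m₂ 0 :=
  Submodule.subset_span (Or.inr (by simp))

lemma LData.c2_mem_Lj_zero : D.c2 ∈ Lj D m₁ m₂ 0 :=
  Submodule.subset_span (Or.inr (by simp))

namespace GradedRep

variable (G : GradedRep D m₁ m₂ V)

lemma lie_eq_zero_of_lie_sum_eq_zero {j : ℤ} {x : L} (hx : x ∈ Lj D m₁ m₂ j) {s : Finset ℤ}
    {f : ℤ → V} (hf : ∀ k, f k ∈ G.comp k) (h : ⁅x, ∑ k ∈ s, f k⁆ = 0) {k : ℤ} (hk : k ∈ s) :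
    ⁅x, f k⁆ = 0 := by
  have hind := (iSupIndep_iff_finsetSum_eq_zero_imp_eq_zero G.comp).mp
    G.internal.submodule_iSupIndep
  have := hind (s.map (addRightEmbedding j)) (fun k' => ⁅x, f (k' - j)⁆)
    (by simpa using fun k _ => G.lie_mem j k x hx (f k) (hf k))
    (by simpa [lie_sum] using h) (k + j) (Finset.mem_map_of_mem _ hk)
  simpa using this

lemma isGradedSub_maxTrivSubmodule (hb : IsZBasis m₁ m₂) :
    G.IsGradedSub (LieModule.maxTrivSubmodule ℂ L V) := by
  refine le_antisymm (fun u hu => ?_) (iSup_le fun k => inf_le_left)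
  obtain ⟨f, hf, rfl⟩ := (Submodule.mem_iSup_iff_exists_finsupp G.comp u).mp
    (G.internal.submodule_iSup_eq_top ▸ Submodule.mem_top)
  refine Submodule.sum_mem _ fun k hk => Submodule.mem_iSup_of_mem k ⟨?_, hf k⟩
  have hhom {j : ℤ} {x : L} (hx : x ∈ Lj D m₁ m₂ j) : ⁅x, f k⁆ = 0 :=
    G.lie_eq_zero_of_lie_sum_eq_zero hx hf ((LieModule.mem_maxTrivSubmodule ℂ L V _).mp hu x) hk
  exact D.mem_maxTrivSubmodule_of_generators
    (fun i n => (D.t_mem_Lj hb i n).elim fun _ hx => hhom hx)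
    (hhom D.c1_mem_Lj_zero) (hhom D.c2_mem_Lj_zero)

end GradedRep

variable (D) in
def eventuallyKilled (b1 b2 : ℤ × ℤ) : Submodule ℂ V where
  carrier := {u | ∀ᶠ x in atTop, ∀ j, ⁅D.t j (ofCoords b1 b2 x), u⁆ = 0}
  add_mem' {u v} hu hv := by
    filter_upwards [hu, hv] with x hux hvx j
    rw [lie_add, hux, hvx, add_zero]
  zero_mem' := .of_forall fun _ _ => lie_zero _
  smul_mem' c u hu := by
    filter_upwards [hu] with x hx j
    rw [lie_smul, hx, smul_zero]

lemma lie_mem_eventuallyKilled {b1 b2 : ℤ × ℤ} (hb : IsZBasis b1 b2) (z : L) {u : V}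
    (hu : u ∈ eventuallyKilled D b1 b2) : ⁅z, u⁆ ∈ eventuallyKilled D b1 b2 := by
  have hcentral {c : L} (hc : ∀ x : L, ⁅c, x⁆ = 0) : ⁅c, u⁆ ∈ eventuallyKilled D b1 b2 := by
    filter_upwards [hu] with x hx j
    rw [leibniz_lie, hx, lie_zero, add_zero, ← lie_skew, hc, neg_zero, zero_lie]
  refine D.lie_mem_of_generators _ (fun i n => ?_) (hcentral D.c1_central)
    (hcentral D.c2_central) z
  obtain ⟨y, rfl⟩ := hb.ofCoords_surjective n
  have hshift : Tendsto (· + y) atTop atTop := tendsto_atTop_add_const_right atTop y tendsto_id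
  filter_upwards [hu, hshift.eventually hu, hshift.eventually (eventually_ne_atTop 0)]
    with x hx hxy hne j
  have hsum : ofCoords b1 b2 x + ofCoords b1 b2 y ≠ 0 := by
    rwa [← map_add, ne_eq, map_eq_zero_iff _ hb.ofCoords_injective]
  rw [leibniz_lie, hx, lie_zero, add_zero, D.lie_t_t_of_add_ne_zero hsum, smul_lie, ← map_add,
    hxy, smul_zero]

lemma eventuallyKilled_eq_top {b1 b2 : ℤ × ℤ} (hb : IsZBasis b1 b2) {v : V}
    (hspan : LieSubmodule.lieSpan ℂ L {v} = ⊤)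
    (hv : ∀ (a b : ℕ) (i : ZMod 2), ⁅D.t i ((a : ℤ) • b1 + (b : ℤ) • b2), v⁆ = 0) :
    eventuallyKilled D b1 b2 = (⊤ : Submodule ℂ V) := by
  let S : LieSubmodule ℂ L V :=
    { eventuallyKilled D b1 b2 with lie_mem := lie_mem_eventuallyKilled hb _ }
  have hvS : v ∈ S := by
    filter_upwards [eventually_ge_atTop 0] with x hx j
    obtain ⟨a, ha⟩ := Int.eq_ofNat_of_zero_le hx.1
    obtain ⟨b, hb'⟩ := Int.eq_ofNat_of_zero_le hx.2
    rw [ofCoords_apply, ha, hb']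
    exact hv a b j
  have hS : S = ⊤ := top_unique (hspan ▸ LieSubmodule.lieSpan_le.mpr (by simpa using hvS))
  exact congrArg LieSubmodule.toSubmodule hS

lemma lie_t_eq_zero_of_detZ_ne_zero (hq : Generic q) {b1 b2 : ℤ × ℤ} (hb : IsZBasis b1 b2)
    {w : V} (hw : w ∈ eventuallyKilled D b1 b2) {y : ℤ × ℤ} (hy1 : 0 < y.1) (hy2 : 0 < y.2)
    {i : ZMod 2} (hd : ⁅D.t i (ofCoords b1 b2 (-y)), w⁆ = 0) {n : ℤ × ℤ}
    (hn : detZ n (ofCoords b1 b2 (-y)) ≠ 0) (j : ZMod 2) : ⁅D.t j n, w⁆ = 0 := by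
  obtain ⟨x, rfl⟩ := hb.ofCoords_surjective n
  obtain ⟨k, hk⟩ := ((tendsto_add_nsmul_atTop hy1 hy2 x).eventually hw).exists
  refine lie_t_eq_zero_of_lie_t_sub_nsmul hq hd k hn (fun j => ?_) j
  rw [map_neg, smul_neg, sub_neg_eq_add, ← map_nsmul, ← map_add]
  exact hk j

/-- in a nontrivial irreducible generalized highest weight ℤ-graded
`L`-module corresponding to the ℤ-basis `{b1, b2}`, the elements
`t_0^i t^{−a b1 − b b2}` (`a, b > 0`) act injectively on nonzero vectors. -/
theorem GHW_negative_cone_acts_nontrivially (q : ℂ) (hq : Generic q)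
    {L : Type} [LieRing L] [LieAlgebra ℂ L] (D : LData q L)
    (m₁ m₂ : ℤ × ℤ) (hb : IsZBasis m₁ m₂)
    {V : Type} [AddCommGroup V] [Module ℂ V] [LieRingModule L V] [LieModule ℂ L V]
    (G : GradedRep D m₁ m₂ V) (hirr : G.IsIrreducible)
    (hnt : ∃ (x : L) (w : V), ⁅x, w⁆ ≠ 0)
    (b1 b2 : ℤ × ℤ) (hghw : G.IsGHWFor b1 b2) :
    ∀ w : V, w ≠ 0 → ∀ a b : ℤ, 0 < a → 0 < b →
      ∀ i : ZMod 2, ⁅D.t i ((-a) • b1 + (-b) • b2), w⁆ ≠ 0 := by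
  obtain ⟨hbasis, -, v, -, -, hspan, hv⟩ := hghw
  intro w hw a b ha hb0 i hwd
  have hd0 : ofCoords b1 b2 (-(a, b)) ≠ 0 := by
    rw [ne_eq, map_eq_zero_iff _ hbasis.ofCoords_injective]
    simp [ha.ne']
  have hwL : w ∈ LieModule.maxTrivSubmodule ℂ L V :=
    mem_maxTrivSubmodule_of_lie_t_eq_zero fun n hn =>
      lie_t_eq_zero_of_ne_zero hq hd0
        (fun m hm => lie_t_eq_zero_of_detZ_ne_zero hq hbasis
          (eventuallyKilled_eq_top hbasis hspan hv ▸ Submodule.mem_top) ha hb0 hwd hm) hn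
  rcases hirr.2 _ (G.isGradedSub_maxTrivSubmodule hb) with h | h
  · exact hw (by rwa [h, LieSubmodule.mem_bot] at hwL)
  · obtain ⟨x, u, hxu⟩ := hnt
    exact hxu ((LieModule.mem_maxTrivSubmodule ℂ L V u).mp (h ▸ LieSubmodule.mem_top u) x)

end QTorus
end
end
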